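/- Let A and B be bounded linear operators on a complex Hilbert space H, and let T be the operator on H ⊕ H given by the 2×2 operator matrix with zero diagonal entries, (1,2)-entry A, and (2,1)-entry B*. Then 2 w(T) = sup over θ ∈ ℝ of ‖e^{iθ} A + e^{−iθ} B‖, where w denotes the numerical radius. -/

import Mathlib

/-- The numerical radius of a bounded linear operator. -/
noncomputable def numRadius {E : Type*} [NormedAddCommGroup E] [InnerProductSpace ℂ E]
    (T : E →L[ℂ] E) : ℝ :=
  ⨆ x : {x : E // ‖x‖ = 1}, ‖(inner ℂ (T x.val) x.val : ℂ)‖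

/-- The 2×2 operator matrix `[[0, C],[D, 0]]` acting on `H ⊕ H` (as `WithLp 2 (H × H)`)
by `(x, y) ↦ (C y, D x)`. -/
noncomputable def offDiagOp {H : Type*} [NormedAddCommGroup H] [InnerProductSpace ℂ H]
    (C D : H →L[ℂ] H) : WithLp 2 (H × H) →L[ℂ] WithLp 2 (H × H) :=
  ((WithLp.prodContinuousLinearEquiv 2 ℂ H H).symm : (H × H) →L[ℂ] WithLp 2 (H × H)) ∘L
    ((C ∘L ContinuousLinearMap.snd ℂ H H).prod (D ∘L ContinuousLinearMap.fst ℂ H H)) ∘L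
    ((WithLp.prodContinuousLinearEquiv 2 ℂ H H) : WithLp 2 (H × H) →L[ℂ] (H × H))

/-!
For `z = (y, x)` one has `⟪T z, z⟫ = ⟪A x, y⟫ + conj ⟪B x, y⟫`, and for
`F θ = e^{iθ} A + e^{-iθ} B` one has `⟪F θ x, y⟫ = e^{iθ} ⟪B x, y⟫ + e^{-iθ} ⟪A x, y⟫`.
Both have modulus at most `|⟪A x, y⟫| + |⟪B x, y⟫|`, and the bound is attained by a suitable
phase: of `θ` for `F θ`, and of the component `y` of `z` for `T`. So `2 w(T)` and `sup_θ ‖F θ‖`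
are both the supremum of `|⟪A x, y⟫| + |⟪B x, y⟫|` over unit vectors `x`, `y`; the factor `2`
comes from `‖x‖ ‖y‖ ≤ (‖x‖² + ‖y‖²) / 2`, with equality for `‖x‖ = ‖y‖`.
-/

open Complex ComplexConjugate

lemma Complex.conj_exp_ofReal_mul_I (θ : ℝ) : conj (exp (θ * I)) = exp (-(θ * I)) := by
  rw [← exp_conj, map_mul, conj_ofReal, conj_I, mul_neg]

lemma Complex.norm_exp_neg_ofReal_mul_I (θ : ℝ) : ‖exp (-(θ * I))‖ = 1 := by
  rw [← conj_exp_ofReal_mul_I, norm_conj, norm_exp_ofReal_mul_I]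

lemma Complex.norm_exp_mul_add_exp_neg_mul_le (a b : ℂ) (θ : ℝ) :
    ‖exp (θ * I) * a + exp (-(θ * I)) * b‖ ≤ ‖a‖ + ‖b‖ := by
  simpa [norm_exp_neg_ofReal_mul_I] using norm_add_le (exp (θ * I) * a) (exp (-(θ * I)) * b)

lemma Complex.exists_norm_exp_mul_add_exp_neg_mul_eq (a b : ℂ) :
    ∃ θ : ℝ, ‖exp (θ * I) * a + exp (-(θ * I)) * b‖ = ‖a‖ + ‖b‖ := by
  refine ⟨(b.arg - a.arg) / 2, ?_⟩
  -- both terms are rotated to the common argument `(arg a + arg b) / 2`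
  have hrot : ∀ (c : ℂ) (φ : ℝ), φ + c.arg = (a.arg + b.arg) / 2 →
      exp (φ * I) * c = ‖c‖ * exp (((a.arg + b.arg) / 2 : ℝ) * I) := by
    intro c φ hφ
    conv_lhs => rw [← norm_mul_exp_arg_mul_I c]
    rw [← hφ, mul_left_comm, ← exp_add]
    push_cast
    ring_nf
  rw [hrot a _ (by ring), ← neg_mul, ← ofReal_neg, hrot b _ (by ring), ← add_mul, norm_mul,
    norm_exp_ofReal_mul_I, mul_one, ← ofReal_add, norm_real, Real.norm_of_nonneg (by positivity)]

section NumRadius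

variable {E : Type*} [NormedAddCommGroup E] [InnerProductSpace ℂ E] (T : E →L[ℂ] E)

lemma numRadius_nonneg : 0 ≤ numRadius T :=
  Real.iSup_nonneg fun _ ↦ norm_nonneg _

lemma bddAbove_range_norm_inner_self :
    BddAbove (Set.range fun x : {x : E // ‖x‖ = 1} ↦ ‖(inner ℂ (T x.val) x.val : ℂ)‖) := by
  refine ⟨‖T‖, ?_⟩
  rintro _ ⟨⟨x, hx⟩, rfl⟩
  simpa [hx] using (norm_inner_le_norm (𝕜 := ℂ) (T x) x).trans
    (mul_le_mul_of_nonneg_right (T.le_opNorm x) (norm_nonneg x))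

lemma norm_inner_self_le_numRadius {x : E} (hx : ‖x‖ = 1) :
    ‖(inner ℂ (T x) x : ℂ)‖ ≤ numRadius T :=
  le_ciSup (bddAbove_range_norm_inner_self T) ⟨x, hx⟩

lemma norm_inner_self_le_numRadius_mul_sq (x : E) :
    ‖(inner ℂ (T x) x : ℂ)‖ ≤ numRadius T * ‖x‖ ^ 2 := by
  rcases eq_or_ne x 0 with rfl | hx
  · simp
  have hx' : ‖x‖ ≠ 0 := norm_ne_zero_iff.mpr hx
  have hunit : ‖((‖x‖⁻¹ : ℝ) : ℂ) • x‖ = 1 := by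
    rw [norm_smul, norm_real, Real.norm_of_nonneg (by positivity), inv_mul_cancel₀ hx']
  have h := norm_inner_self_le_numRadius T hunit
  rw [map_smul, inner_smul_left, inner_smul_right, conj_ofReal, ← mul_assoc, norm_mul,
    ← ofReal_mul, norm_real, Real.norm_of_nonneg (by positivity)] at h
  rwa [← mul_inv, ← sq, inv_mul_le_iff₀ (by positivity), mul_comm] at h

lemma numRadius_le {c : ℝ} (hc : 0 ≤ c)
    (h : ∀ x : E, ‖x‖ = 1 → ‖(inner ℂ (T x) x : ℂ)‖ ≤ c) : numRadius T ≤ c :=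
  Real.iSup_le (fun x ↦ h x.1 x.2) hc

end NumRadius

section OffDiagonal

variable {H : Type*} [NormedAddCommGroup H] [InnerProductSpace ℂ H]

lemma inner_offDiagOp_self (C D : H →L[ℂ] H) (z : WithLp 2 (H × H)) :
    (inner ℂ (offDiagOp C D z) z : ℂ) = inner ℂ (C z.snd) z.fst + inner ℂ (D z.fst) z.snd := rfl

end OffDiagonal

section PhaseSum

variable {H : Type*} [NormedAddCommGroup H] [InnerProductSpace ℂ H] (A B : H →L[ℂ] H)

noncomputable def phaseSum (θ : ℝ) : H →L[ℂ] H :=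
  exp (θ * I) • A + exp (-(θ * I)) • B

lemma inner_phaseSum_apply (θ : ℝ) (x y : H) :
    (inner ℂ (phaseSum A B θ x) y : ℂ) =
      exp (θ * I) * inner ℂ (B x) y + exp (-(θ * I)) * inner ℂ (A x) y := by
  simp only [phaseSum, add_apply, smul_apply, inner_add_left, inner_smul_left, ← exp_conj,
    map_neg, map_mul, conj_ofReal, conj_I, mul_neg, neg_neg]
  ring

lemma norm_inner_phaseSum_le (θ : ℝ) (x y : H) :
    ‖(inner ℂ (phaseSum A B θ x) y : ℂ)‖ ≤
      ‖(inner ℂ (A x) y : ℂ)‖ + ‖(inner ℂ (B x) y : ℂ)‖ := by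
  rw [inner_phaseSum_apply, add_comm ‖_‖]
  exact norm_exp_mul_add_exp_neg_mul_le _ _ θ

lemma exists_norm_inner_phaseSum_eq (x y : H) :
    ∃ θ : ℝ, ‖(inner ℂ (phaseSum A B θ x) y : ℂ)‖ =
      ‖(inner ℂ (A x) y : ℂ)‖ + ‖(inner ℂ (B x) y : ℂ)‖ := by
  simpa only [inner_phaseSum_apply, add_comm ‖(inner ℂ (A x) y : ℂ)‖] using
    exists_norm_exp_mul_add_exp_neg_mul_eq (inner ℂ (B x) y) (inner ℂ (A x) y)

lemma norm_phaseSum_le (θ : ℝ) : ‖phaseSum A B θ‖ ≤ ‖A‖ + ‖B‖ := by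
  refine (norm_add_le _ _).trans ?_
  rw [norm_smul, norm_smul, norm_exp_ofReal_mul_I, norm_exp_neg_ofReal_mul_I, one_mul, one_mul]

lemma bddAbove_range_norm_phaseSum : BddAbove (Set.range fun θ ↦ ‖phaseSum A B θ‖) :=
  ⟨‖A‖ + ‖B‖, by rintro _ ⟨θ, rfl⟩; exact norm_phaseSum_le A B θ⟩

variable [CompleteSpace H]

lemma norm_inner_add_norm_inner_le_two_mul_numRadius {x y : H} (hx : ‖x‖ = 1) (hy : ‖y‖ = 1) :
    ‖(inner ℂ (A x) y : ℂ)‖ + ‖(inner ℂ (B x) y : ℂ)‖ ≤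
      2 * numRadius (offDiagOp A (ContinuousLinearMap.adjoint B)) := by
  obtain ⟨φ, hφ⟩ :=
    exists_norm_exp_mul_add_exp_neg_mul_eq (inner ℂ (A x) y) (conj (inner ℂ (B x) y))
  set z : WithLp 2 (H × H) := WithLp.toLp 2 (exp (φ * I) • y, x)
  have hz : ‖z‖ ^ 2 = 2 := by
    rw [WithLp.prod_norm_sq_eq_of_L2]
    simp only [z, WithLp.toLp_fst, WithLp.toLp_snd, norm_smul, norm_exp_ofReal_mul_I, hx, hy]
    norm_num
  have hTz : (inner ℂ (offDiagOp A (ContinuousLinearMap.adjoint B) z) z : ℂ) =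
      exp (φ * I) * inner ℂ (A x) y + exp (-(φ * I)) * conj (inner ℂ (B x) y) := by
    rw [inner_offDiagOp_self]
    simp only [z, WithLp.toLp_fst, WithLp.toLp_snd, inner_smul_right, map_smul, inner_smul_left,
      ContinuousLinearMap.adjoint_inner_left, conj_exp_ofReal_mul_I, inner_conj_symm]
  have := norm_inner_self_le_numRadius_mul_sq (offDiagOp A (ContinuousLinearMap.adjoint B)) z
  rwa [hTz, hφ, norm_conj, hz, mul_comm] at this

lemma norm_phaseSum_le_two_mul_numRadius (θ : ℝ) :
    ‖phaseSum A B θ‖ ≤ 2 * numRadius (offDiagOp A (ContinuousLinearMap.adjoint B)) := by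
  refine ContinuousLinearMap.opNorm_le_of_re_inner_le
    (mul_nonneg zero_le_two (numRadius_nonneg _)) fun x y hx hy ↦ ?_
  calc re (inner ℂ (phaseSum A B θ x) y) ≤ ‖(inner ℂ (phaseSum A B θ x) y : ℂ)‖ := re_le_norm _
    _ ≤ ‖(inner ℂ (A x) y : ℂ)‖ + ‖(inner ℂ (B x) y : ℂ)‖ := norm_inner_phaseSum_le A B θ x y
    _ ≤ _ := norm_inner_add_norm_inner_le_two_mul_numRadius A B hx hy

lemma two_mul_numRadius_le_iSup_norm_phaseSum :
    2 * numRadius (offDiagOp A (ContinuousLinearMap.adjoint B)) ≤ ⨆ θ, ‖phaseSum A B θ‖ := by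
  rw [← le_div_iff₀' zero_lt_two]
  refine numRadius_le _ (div_nonneg (Real.iSup_nonneg fun _ ↦ norm_nonneg _) zero_le_two)
    fun z hz ↦ ?_
  obtain ⟨θ, hθ⟩ := exists_norm_inner_phaseSum_eq A B z.snd z.fst
  have hz2 : ‖z.fst‖ ^ 2 + ‖z.snd‖ ^ 2 = 1 := by rw [← WithLp.prod_norm_sq_eq_of_L2, hz, one_pow]
  have hamgm : ‖z.snd‖ * ‖z.fst‖ ≤ 1 / 2 := by nlinarith [sq_nonneg (‖z.fst‖ - ‖z.snd‖)]
  calc ‖(inner ℂ (offDiagOp A (ContinuousLinearMap.adjoint B) z) z : ℂ)‖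
      ≤ ‖(inner ℂ (A z.snd) z.fst : ℂ)‖ + ‖(inner ℂ (B z.snd) z.fst : ℂ)‖ := by
        rw [inner_offDiagOp_self, ContinuousLinearMap.adjoint_inner_left, ← inner_conj_symm z.fst,
          ← norm_conj (inner ℂ (B z.snd) z.fst)]
        exact norm_add_le _ _
    _ = ‖(inner ℂ (phaseSum A B θ z.snd) z.fst : ℂ)‖ := hθ.symm
    _ ≤ ‖phaseSum A B θ‖ * ‖z.snd‖ * ‖z.fst‖ :=
        (norm_inner_le_norm _ _).trans
          (mul_le_mul_of_nonneg_right (ContinuousLinearMap.le_opNorm _ _) (norm_nonneg _))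
    _ ≤ ‖phaseSum A B θ‖ / 2 := by
        rw [mul_assoc, div_eq_mul_one_div]
        exact mul_le_mul_of_nonneg_left hamgm (norm_nonneg _)
    _ ≤ (⨆ θ, ‖phaseSum A B θ‖) / 2 := by
        gcongr
        exact le_ciSup (bddAbove_range_norm_phaseSum A B) θ

end PhaseSum

theorem stmt_8 {H : Type*} [NormedAddCommGroup H] [InnerProductSpace ℂ H] [CompleteSpace H]
    (A B : H →L[ℂ] H) (T : WithLp 2 (H × H) →L[ℂ] WithLp 2 (H × H))
    (hT : T = offDiagOp A (ContinuousLinearMap.adjoint B)) :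
    2 * numRadius T =
      ⨆ θ : ℝ, ‖Complex.exp (θ * Complex.I) • A + Complex.exp (-(θ * Complex.I)) • B‖ := by
  subst hT
  exact le_antisymm (two_mul_numRadius_le_iSup_norm_phaseSum A B)
    (Real.iSup_le (norm_phaseSum_le_two_mul_numRadius A B)
      (mul_nonneg zero_le_two (numRadius_nonneg _)))
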